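/- arXiv:1512.01714 — 3 statements merged into one kernel-verified Lean document; each statement's English description precedes it below -/
import Mathlib

section
/- If the LTV system x_{n+1} = A_n x_n admits a (h,k,μ,ν)-trichotomy with orthogonal (self-adjoint) invariant projections (P_n^1),(P_n^2),(P_n^3), then the rescaled system with B_n = (h_{n+1}/h_n)^{a/2}(k_{n+1}/k_n)^{b/2} A_n admits an FP (h̃,μ,ν)-dichotomy with h̃_n = h_n^a / k_n^b, with projections S_n^1 = P_n^1 and S_n^2 = P_n^2 + P_n^3; that is, ‖B_m^n S_n^1 x‖ ≤ K (h̃_n/h̃_m)^{1/2} μ_n^ε ‖S_n^1 x‖ and ‖S_n^2 x‖ ≤ K (h̃_n/h̃_m)^{1/2} ν_m^ε ‖B_m^n S_n^2 x‖ for all m ≥ n and x ∈ H. -/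
open Filter

/-- If the LTV system admits a `(h,k,μ,ν)`-trichotomy, then the rescaled system `B`
admits an FP `(h̃,μ,ν)`-dichotomy with `h̃_n = h_n^a / k_n^b`, with projections
`S¹ = P¹` and `S² = P² + P³`. -/
theorem trichotomy_implies_FP_dichotomy_B
    {H : Type*} [NormedAddCommGroup H] [InnerProductSpace ℝ H] [CompleteSpace H]
    (A : ℕ → H →L[ℝ] H) (T TB : ℕ → ℕ → (H →L[ℝ] H))
    (h k μ ν : ℕ → ℝ) (K a b ε : ℝ)
    (hh : Monotone h ∧ h 0 = 1 ∧ (∀ n, 1 ≤ h n) ∧ Tendsto h atTop atTop)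
    (hk : Monotone k ∧ k 0 = 1 ∧ (∀ n, 1 ≤ k n) ∧ Tendsto k atTop atTop)
    (hμ : Monotone μ ∧ μ 0 = 1 ∧ (∀ n, 1 ≤ μ n) ∧ Tendsto μ atTop atTop)
    (hν : Monotone ν ∧ ν 0 = 1 ∧ (∀ n, 1 ≤ ν n) ∧ Tendsto ν atTop atTop)
    (hK : 0 < K) (ha : 0 < a) (hb : 0 ≤ b) (hε : 0 ≤ ε)
    (hT0 : ∀ n, T n n = 1)
    (hTs : ∀ m n, n ≤ m → T (m + 1) n = (A m).comp (T m n))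
    (hTB : ∀ m n, n ≤ m →
      TB m n = (((h m / h n) ^ (a / 2)) * ((k m / k n) ^ (b / 2))) • T m n)
    (P1 P2 P3 : ℕ → H →L[ℝ] H)
    (hp1 : ∀ n, (P1 n).comp (P1 n) = P1 n) (hsa1 : ∀ n, IsSelfAdjoint (P1 n))
    (hp2 : ∀ n, (P2 n).comp (P2 n) = P2 n) (hsa2 : ∀ n, IsSelfAdjoint (P2 n))
    (hp3 : ∀ n, (P3 n).comp (P3 n) = P3 n) (hsa3 : ∀ n, IsSelfAdjoint (P3 n))
    (hsum : ∀ n, P1 n + P2 n + P3 n = 1)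
    (h12 : ∀ n, (P1 n).comp (P2 n) = 0) (h21 : ∀ n, (P2 n).comp (P1 n) = 0)
    (h13 : ∀ n, (P1 n).comp (P3 n) = 0) (h31 : ∀ n, (P3 n).comp (P1 n) = 0)
    (h23 : ∀ n, (P2 n).comp (P3 n) = 0) (h32 : ∀ n, (P3 n).comp (P2 n) = 0)
    (hinv1 : ∀ n, (A n).comp (P1 n) = (P1 (n + 1)).comp (A n))
    (hinv2 : ∀ n, (A n).comp (P2 n) = (P2 (n + 1)).comp (A n))
    (hinv3 : ∀ n, (A n).comp (P3 n) = (P3 (n + 1)).comp (A n))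
    (ht1 : ∀ m n, n ≤ m → ∀ x : H,
      ‖T m n (P1 n x)‖ ≤ K * (h n / h m) ^ a * μ n ^ ε * ‖P1 n x‖)
    (ht2 : ∀ m n, n ≤ m → ∀ x : H,
      ‖P2 n x‖ ≤ K * (k n / k m) ^ b * ν m ^ ε * ‖T m n (P2 n x)‖)
    (ht3 : ∀ m n, n ≤ m → ∀ x : H,
      ‖T m n (P3 n x)‖ ≤ K * (h m / h n) ^ a * μ n ^ ε * ‖P3 n x‖)
    (ht4 : ∀ m n, n ≤ m → ∀ x : H,
      ‖P3 n x‖ ≤ K * (k m / k n) ^ b * ν m ^ ε * ‖T m n (P3 n x)‖) :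
    ∀ m n, n ≤ m → ∀ x : H,
      ‖TB m n (P1 n x)‖ ≤
        K * ((h n ^ a / k n ^ b) / (h m ^ a / k m ^ b)) ^ ((1 : ℝ) / 2) *
          μ n ^ ε * ‖P1 n x‖ ∧
      ‖(P2 n + P3 n) x‖ ≤
        K * ((h n ^ a / k n ^ b) / (h m ^ a / k m ^ b)) ^ ((1 : ℝ) / 2) *
          ν m ^ ε * ‖TB m n ((P2 n + P3 n) x)‖ := by
  intro m n hmn x
  -- positivity facts
  have hn0 : (0:ℝ) < h n := lt_of_lt_of_le one_pos (hh.2.2.1 n)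
  have hm0 : (0:ℝ) < h m := lt_of_lt_of_le one_pos (hh.2.2.1 m)
  have kn0 : (0:ℝ) < k n := lt_of_lt_of_le one_pos (hk.2.2.1 n)
  have km0 : (0:ℝ) < k m := lt_of_lt_of_le one_pos (hk.2.2.1 m)
  have hnm : h n ≤ h m := hh.1 hmn
  have knm : k n ≤ k m := hk.1 hmn
  have hx : (0:ℝ) < h n / h m := by positivity
  have hy : (0:ℝ) < k m / k n := by positivity
  have hc0 : (0:ℝ) < (h m / h n) ^ (a / 2) * (k m / k n) ^ (b / 2) := by positivity
  -- the key rpow identity for the dichotomy rate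
  have key1 : ((h n ^ a / k n ^ b) / (h m ^ a / k m ^ b)) ^ ((1 : ℝ) / 2)
      = (h n / h m) ^ (a / 2) * (k m / k n) ^ (b / 2) := by
    have e1 : (h n ^ a / k n ^ b) / (h m ^ a / k m ^ b)
        = (h n / h m) ^ a * (k m / k n) ^ b := by
      rw [Real.div_rpow hn0.le hm0.le, Real.div_rpow km0.le kn0.le]
      have h1 : (0:ℝ) < h m ^ a := Real.rpow_pos_of_pos hm0 a
      have h2 : (0:ℝ) < k n ^ b := Real.rpow_pos_of_pos kn0 b
      have h3 : (0:ℝ) < k m ^ b := Real.rpow_pos_of_pos km0 b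
      field_simp
    rw [e1, Real.mul_rpow (by positivity) (by positivity),
      ← Real.rpow_mul hx.le, ← Real.rpow_mul hy.le, mul_one_div, mul_one_div]
  have hinvd : h m / h n = (h n / h m)⁻¹ := by rw [inv_div]
  -- identity for part 1
  have ident1 : (h m / h n) ^ (a / 2) * (h n / h m) ^ a = (h n / h m) ^ (a / 2) := by
    rw [hinvd, Real.inv_rpow hx.le, ← Real.rpow_neg hx.le, ← Real.rpow_add hx]
    congr 1
    ring
  -- identity for part 2
  have ident2 : ((h n / h m) ^ (a / 2) * (k m / k n) ^ (b / 2)) *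
      ((h m / h n) ^ (a / 2) * (k m / k n) ^ (b / 2)) = (k m / k n) ^ b := by
    have i1 : (h n / h m) ^ (a / 2) * (h m / h n) ^ (a / 2) = 1 := by
      rw [← Real.mul_rpow hx.le (by positivity)]
      have : h n / h m * (h m / h n) = 1 := by field_simp
      rw [this, Real.one_rpow]
    have i2 : (k m / k n) ^ (b / 2) * (k m / k n) ^ (b / 2) = (k m / k n) ^ b := by
      rw [← Real.rpow_add hy]
      congr 1
      ring
    calc ((h n / h m) ^ (a / 2) * (k m / k n) ^ (b / 2)) *
          ((h m / h n) ^ (a / 2) * (k m / k n) ^ (b / 2))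
        = ((h n / h m) ^ (a / 2) * (h m / h n) ^ (a / 2)) *
          ((k m / k n) ^ (b / 2) * (k m / k n) ^ (b / 2)) := by ring
      _ = (k m / k n) ^ b := by rw [i1, i2, one_mul]
  -- commutation of T with invariant projections
  have comm : ∀ (P : ℕ → H →L[ℝ] H),
      (∀ j, (A j).comp (P j) = (P (j + 1)).comp (A j)) →
      ∀ m' n', n' ≤ m' → (T m' n').comp (P n') = (P m').comp (T m' n') := by
    intro P hP m' n' hm'
    induction m', hm' using Nat.le_induction with
    | base => simp [hT0, ContinuousLinearMap.one_def]
    | succ j hj ih =>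
        rw [hTs j n' hj, ContinuousLinearMap.comp_assoc, ih,
          ← ContinuousLinearMap.comp_assoc, hP, ContinuousLinearMap.comp_assoc]
  have hTBeq := hTB m n hmn
  constructor
  · -- part 1
    have h1 := ht1 m n hmn x
    calc ‖TB m n (P1 n x)‖
        = ((h m / h n) ^ (a / 2) * (k m / k n) ^ (b / 2)) * ‖T m n (P1 n x)‖ := by
          rw [hTBeq, ContinuousLinearMap.smul_apply, norm_smul, Real.norm_eq_abs,
            abs_of_pos hc0]
      _ ≤ ((h m / h n) ^ (a / 2) * (k m / k n) ^ (b / 2)) *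
            (K * (h n / h m) ^ a * μ n ^ ε * ‖P1 n x‖) := by
          exact mul_le_mul_of_nonneg_left h1 hc0.le
      _ = K * ((h n ^ a / k n ^ b) / (h m ^ a / k m ^ b)) ^ ((1 : ℝ) / 2) *
            μ n ^ ε * ‖P1 n x‖ := by
          rw [key1]
          linear_combination (K * (k m / k n) ^ (b / 2) * μ n ^ ε * ‖P1 n x‖) * ident1
  · -- part 2
    set u := P2 n x with hu
    set v := P3 n x with hv
    -- orthogonality at time n
    have hP2P3 : P2 n (P3 n x) = 0 := by
      have := ContinuousLinearMap.ext_iff.mp (h23 n) x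
      simpa using this
    have huv : (inner ℝ u v : ℝ) = 0 := by
      calc (inner ℝ u v : ℝ) = inner ℝ x (P2 n (P3 n x)) := (hsa2 n).isSymmetric x (P3 n x)
        _ = 0 := by rw [hP2P3, inner_zero_right]
    -- orthogonality of images at time m
    have hTu : T m n u = P2 m (T m n x) := by
      have := ContinuousLinearMap.ext_iff.mp (comm P2 hinv2 m n hmn) x
      simpa using this
    have hTv : T m n v = P3 m (T m n x) := by
      have := ContinuousLinearMap.ext_iff.mp (comm P3 hinv3 m n hmn) x
      simpa using this
    have hP2P3m : P2 m (P3 m (T m n x)) = 0 := by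
      have := ContinuousLinearMap.ext_iff.mp (h23 m) (T m n x)
      simpa using this
    have hTuv : (inner ℝ (T m n u) (T m n v) : ℝ) = 0 := by
      rw [hTu, hTv]
      calc (inner ℝ (P2 m (T m n x)) (P3 m (T m n x)) : ℝ)
          = inner ℝ (T m n x) (P2 m (P3 m (T m n x))) :=
            (hsa2 m).isSymmetric (T m n x) (P3 m (T m n x))
        _ = 0 := by rw [hP2P3m, inner_zero_right]
    -- pythagoras
    have pyth1 : ‖u + v‖ ^ 2 = ‖u‖ ^ 2 + ‖v‖ ^ 2 := by
      rw [norm_add_sq_real, huv]; ring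
    have pyth2 : ‖T m n u + T m n v‖ ^ 2 = ‖T m n u‖ ^ 2 + ‖T m n v‖ ^ 2 := by
      rw [norm_add_sq_real, hTuv]; ring
    -- bounds
    have hg : (k n / k m) ^ b ≤ (k m / k n) ^ b := by
      apply Real.rpow_le_rpow (by positivity) _ hb
      calc k n / k m ≤ 1 := by rw [div_le_one km0]; exact knm
        _ ≤ k m / k n := by rw [le_div_iff₀ kn0]; simpa using knm
    have hν1 : (0:ℝ) < ν m ^ ε := Real.rpow_pos_of_pos (lt_of_lt_of_le one_pos (hν.2.2.1 m)) ε
    set C := K * (k m / k n) ^ b * ν m ^ ε with hC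
    have hC0 : 0 < C := by positivity
    have hbu : ‖u‖ ≤ C * ‖T m n u‖ := by
      have h2 := ht2 m n hmn x
      refine h2.trans ?_
      rw [hC]
      have : K * (k n / k m) ^ b * ν m ^ ε ≤ K * (k m / k n) ^ b * ν m ^ ε := by
        apply mul_le_mul_of_nonneg_right _ hν1.le
        exact mul_le_mul_of_nonneg_left hg hK.le
      exact mul_le_mul_of_nonneg_right this (norm_nonneg _)
    have hbv : ‖v‖ ≤ C * ‖T m n v‖ := ht4 m n hmn x
    have sq_le : ‖u + v‖ ^ 2 ≤ (C * ‖T m n (u + v)‖) ^ 2 := by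
      have e : T m n (u + v) = T m n u + T m n v := map_add _ _ _
      calc ‖u + v‖ ^ 2 = ‖u‖ ^ 2 + ‖v‖ ^ 2 := pyth1
        _ ≤ (C * ‖T m n u‖) ^ 2 + (C * ‖T m n v‖) ^ 2 :=
            add_le_add (pow_le_pow_left₀ (norm_nonneg u) hbu 2)
              (pow_le_pow_left₀ (norm_nonneg v) hbv 2)
        _ = C ^ 2 * (‖T m n u‖ ^ 2 + ‖T m n v‖ ^ 2) := by ring
        _ = C ^ 2 * ‖T m n u + T m n v‖ ^ 2 := by rw [pyth2]
        _ = (C * ‖T m n (u + v)‖) ^ 2 := by rw [e]; ring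
    have main : ‖u + v‖ ≤ C * ‖T m n (u + v)‖ :=
      le_of_pow_le_pow_left₀ two_ne_zero (by positivity) sq_le
    have happly : (P2 n + P3 n) x = u + v := by simp [hu, hv]
    rw [happly, hTBeq]
    have hTBnorm : ‖(((h m / h n) ^ (a / 2) * (k m / k n) ^ (b / 2)) • T m n) (u + v)‖
        = ((h m / h n) ^ (a / 2) * (k m / k n) ^ (b / 2)) * ‖T m n (u + v)‖ := by
      rw [ContinuousLinearMap.smul_apply, norm_smul, Real.norm_eq_abs, abs_of_pos hc0]
    rw [hTBnorm, key1]
    calc ‖u + v‖ ≤ C * ‖T m n (u + v)‖ := main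
      _ = K * ((h n / h m) ^ (a / 2) * (k m / k n) ^ (b / 2)) * ν m ^ ε *
            (((h m / h n) ^ (a / 2) * (k m / k n) ^ (b / 2)) * ‖T m n (u + v)‖) := by
          rw [hC, ← ident2]
          ring
end

section
/- If the LTV system x_{n+1} = A_n x_n admits a (h,k,μ,ν)-trichotomy with orthogonal (self-adjoint) invariant projections (P_n^1),(P_n^2),(P_n^3), then the rescaled system with C_n = (h_n/h_{n+1})^{a/2}(k_n/k_{n+1})^{b/2} A_n admits an FP (h̄,μ,ν)-dichotomy with h̄_n = k_n^b / h_n^a, with projections T_n^1 = P_n^1 + P_n^3 and T_n^2 = P_n^2; that is, ‖C_m^n T_n^1 x‖ ≤ K (h̄_n/h̄_m)^{1/2} μ_n^ε ‖T_n^1 x‖ and ‖T_n^2 x‖ ≤ K (h̄_n/h̄_m)^{1/2} ν_m^ε ‖C_m^n T_n^2 x‖ for all m ≥ n and x ∈ H. -/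
open Filter
open RealInnerProductSpace

private lemma comm_aux' {H : Type*} [NormedAddCommGroup H] [InnerProductSpace ℝ H]
    (A : ℕ → H →L[ℝ] H) (T : ℕ → ℕ → (H →L[ℝ] H)) (P : ℕ → H →L[ℝ] H)
    (hT0 : ∀ n, T n n = 1)
    (hTs : ∀ m n, n ≤ m → T (m + 1) n = (A m).comp (T m n))
    (hinv : ∀ n, (A n).comp (P n) = (P (n + 1)).comp (A n)) :
    ∀ m n, n ≤ m → (T m n).comp (P n) = (P m).comp (T m n) := by
  intro m n hmn
  induction m, hmn using Nat.le_induction with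
  | base => rw [hT0]; rw [ContinuousLinearMap.one_def, ContinuousLinearMap.comp_id, ContinuousLinearMap.id_comp]
  | succ m hm ih =>
    rw [hTs m n hm, ContinuousLinearMap.comp_assoc, ih, ← ContinuousLinearMap.comp_assoc,
      hinv, ContinuousLinearMap.comp_assoc]

private lemma inner_proj_zero' {H : Type*} [NormedAddCommGroup H] [InnerProductSpace ℝ H]
    [CompleteSpace H] (P Q : H →L[ℝ] H) (hP : IsSelfAdjoint P) (hPQ : P.comp Q = 0)
    (z w : H) : ⟪P z, Q w⟫ = 0 := by
  have h1 : ContinuousLinearMap.adjoint P = P := by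
    rw [← ContinuousLinearMap.star_eq_adjoint]; exact hP
  have h2 : ⟪P z, Q w⟫ = ⟪z, P (Q w)⟫ := by
    conv_lhs => rw [← h1]
    exact ContinuousLinearMap.adjoint_inner_left _ _ _
  have h3 : P (Q w) = (P.comp Q) w := rfl
  rw [h2, h3, hPQ]; simp

/-- If the LTV system admits a `(h,k,μ,ν)`-trichotomy, then the rescaled system `C`
admits an FP `(h̄,μ,ν)`-dichotomy with `h̄_n = k_n^b / h_n^a`, with projections
`T¹ = P¹ + P³` and `T² = P²`. -/
theorem trichotomy_implies_FP_dichotomy_C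
    {H : Type*} [NormedAddCommGroup H] [InnerProductSpace ℝ H] [CompleteSpace H]
    (A : ℕ → H →L[ℝ] H) (T TC : ℕ → ℕ → (H →L[ℝ] H))
    (h k μ ν : ℕ → ℝ) (K a b ε : ℝ)
    (hh : Monotone h ∧ h 0 = 1 ∧ (∀ n, 1 ≤ h n) ∧ Tendsto h atTop atTop)
    (hk : Monotone k ∧ k 0 = 1 ∧ (∀ n, 1 ≤ k n) ∧ Tendsto k atTop atTop)
    (hμ : Monotone μ ∧ μ 0 = 1 ∧ (∀ n, 1 ≤ μ n) ∧ Tendsto μ atTop atTop)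
    (hν : Monotone ν ∧ ν 0 = 1 ∧ (∀ n, 1 ≤ ν n) ∧ Tendsto ν atTop atTop)
    (hK : 0 < K) (ha : 0 < a) (hb : 0 ≤ b) (hε : 0 ≤ ε)
    (hT0 : ∀ n, T n n = 1)
    (hTs : ∀ m n, n ≤ m → T (m + 1) n = (A m).comp (T m n))
    (hTC : ∀ m n, n ≤ m →
      TC m n = (((h n / h m) ^ (a / 2)) * ((k n / k m) ^ (b / 2))) • T m n)
    (P1 P2 P3 : ℕ → H →L[ℝ] H)
    (hp1 : ∀ n, (P1 n).comp (P1 n) = P1 n) (hsa1 : ∀ n, IsSelfAdjoint (P1 n))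
    (hp2 : ∀ n, (P2 n).comp (P2 n) = P2 n) (hsa2 : ∀ n, IsSelfAdjoint (P2 n))
    (hp3 : ∀ n, (P3 n).comp (P3 n) = P3 n) (hsa3 : ∀ n, IsSelfAdjoint (P3 n))
    (hsum : ∀ n, P1 n + P2 n + P3 n = 1)
    (h12 : ∀ n, (P1 n).comp (P2 n) = 0) (h21 : ∀ n, (P2 n).comp (P1 n) = 0)
    (h13 : ∀ n, (P1 n).comp (P3 n) = 0) (h31 : ∀ n, (P3 n).comp (P1 n) = 0)
    (h23 : ∀ n, (P2 n).comp (P3 n) = 0) (h32 : ∀ n, (P3 n).comp (P2 n) = 0)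
    (hinv1 : ∀ n, (A n).comp (P1 n) = (P1 (n + 1)).comp (A n))
    (hinv2 : ∀ n, (A n).comp (P2 n) = (P2 (n + 1)).comp (A n))
    (hinv3 : ∀ n, (A n).comp (P3 n) = (P3 (n + 1)).comp (A n))
    (ht1 : ∀ m n, n ≤ m → ∀ x : H,
      ‖T m n (P1 n x)‖ ≤ K * (h n / h m) ^ a * μ n ^ ε * ‖P1 n x‖)
    (ht2 : ∀ m n, n ≤ m → ∀ x : H,
      ‖P2 n x‖ ≤ K * (k n / k m) ^ b * ν m ^ ε * ‖T m n (P2 n x)‖)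
    (ht3 : ∀ m n, n ≤ m → ∀ x : H,
      ‖T m n (P3 n x)‖ ≤ K * (h m / h n) ^ a * μ n ^ ε * ‖P3 n x‖)
    (ht4 : ∀ m n, n ≤ m → ∀ x : H,
      ‖P3 n x‖ ≤ K * (k m / k n) ^ b * ν m ^ ε * ‖T m n (P3 n x)‖) :
    ∀ m n, n ≤ m → ∀ x : H,
      ‖TC m n ((P1 n + P3 n) x)‖ ≤
        K * ((k n ^ b / h n ^ a) / (k m ^ b / h m ^ a)) ^ ((1 : ℝ) / 2) *
          μ n ^ ε * ‖(P1 n + P3 n) x‖ ∧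
      ‖P2 n x‖ ≤
        K * ((k n ^ b / h n ^ a) / (k m ^ b / h m ^ a)) ^ ((1 : ℝ) / 2) *
          ν m ^ ε * ‖TC m n (P2 n x)‖ := by

  intro m n hmn x
  -- positivity facts
  have hhn0 : (0:ℝ) < h n := lt_of_lt_of_le one_pos (hh.2.2.1 n)
  have hhm0 : (0:ℝ) < h m := lt_of_lt_of_le one_pos (hh.2.2.1 m)
  have hkn0 : (0:ℝ) < k n := lt_of_lt_of_le one_pos (hk.2.2.1 n)
  have hkm0 : (0:ℝ) < k m := lt_of_lt_of_le one_pos (hk.2.2.1 m)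
  have hμn0 : (0:ℝ) < μ n := lt_of_lt_of_le one_pos (hμ.2.2.1 n)
  have hνm0 : (0:ℝ) < ν m := lt_of_lt_of_le one_pos (hν.2.2.1 m)
  have hhmn : h n ≤ h m := hh.1 hmn
  set s : ℝ := k n / k m with hsdef
  set t : ℝ := h m / h n with htdef
  have hs : 0 < s := div_pos hkn0 hkm0
  have ht : 0 < t := div_pos hhm0 hhn0
  have ht1' : 1 ≤ t := (one_le_div hhn0).2 hhmn
  have hlogt : 0 ≤ Real.log t := Real.log_nonneg ht1'
  have hinvt : h n / h m = t⁻¹ := by rw [htdef, inv_div]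
  -- the scaling constant
  set c : ℝ := (h n / h m) ^ (a / 2) * (k n / k m) ^ (b / 2) with hcdef
  have hc : 0 < c := by
    apply mul_pos (Real.rpow_pos_of_pos (div_pos hhn0 hhm0) _) (Real.rpow_pos_of_pos hs _)
  -- the identity for the dichotomy rate
  have hD : ((k n ^ b / h n ^ a) / (k m ^ b / h m ^ a)) ^ ((1:ℝ)/2)
      = s ^ (b/2) * t ^ (a/2) := by
    have e1 : (k n ^ b / h n ^ a) / (k m ^ b / h m ^ a) = s ^ b * t ^ a := by
      rw [hsdef, htdef, Real.div_rpow hkn0.le hkm0.le, Real.div_rpow hhm0.le hhn0.le]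
      have h1 : h n ^ a ≠ 0 := (Real.rpow_pos_of_pos hhn0 _).ne'
      have h2 : h m ^ a ≠ 0 := (Real.rpow_pos_of_pos hhm0 _).ne'
      have h3 : k m ^ b ≠ 0 := (Real.rpow_pos_of_pos hkm0 _).ne'
      field_simp
    rw [e1, Real.mul_rpow (Real.rpow_nonneg hs.le _) (Real.rpow_nonneg ht.le _),
      ← Real.rpow_mul hs.le, ← Real.rpow_mul ht.le]
    rw [show b * (1/2) = b/2 by ring, show a * (1/2) = a/2 by ring]
  set D : ℝ := s ^ (b/2) * t ^ (a/2) with hDdef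
  have hDpos : 0 < D := mul_pos (Real.rpow_pos_of_pos hs _) (Real.rpow_pos_of_pos ht _)
  -- exp/log form helpers
  have hrw_s : ∀ y : ℝ, s ^ y = Real.exp (Real.log s * y) := fun y =>
    Real.rpow_def_of_pos hs y
  have hrw_t : ∀ y : ℝ, t ^ y = Real.exp (Real.log t * y) := fun y =>
    Real.rpow_def_of_pos ht y
  have hrw_ti : ∀ y : ℝ, (t⁻¹) ^ y = Real.exp (-(Real.log t) * y) := by
    intro y
    rw [Real.rpow_def_of_pos (inv_pos.2 ht) y, Real.log_inv]
  constructor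
  · -- first estimate
    have hCT : TC m n ((P1 n + P3 n) x)
        = c • T m n (P1 n x) + c • T m n (P3 n x) := by
      rw [hTC m n hmn]
      simp [ContinuousLinearMap.add_apply, map_add, smul_add, hcdef]
    set C : ℝ := K * D * μ n ^ ε with hCdef
    have hμε : 0 < μ n ^ ε := Real.rpow_pos_of_pos hμn0 _
    have hC0 : 0 ≤ C := by positivity
    -- scalar bounds
    have key1 : c * (h n / h m) ^ a ≤ D := by
      rw [hcdef, hDdef, hinvt, ← hsdef]
      simp only [hrw_ti, hrw_s, hrw_t, ← Real.exp_add]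
      apply Real.exp_le_exp.2
      nlinarith [hlogt, ha.le]
    have key3 : c * (h m / h n) ^ a = D := by
      rw [hcdef, hDdef, hinvt, ← htdef, ← hsdef]
      simp only [hrw_ti, hrw_s, hrw_t, ← Real.exp_add]
      congr 1
      ring
    have b1 : c * ‖T m n (P1 n x)‖ ≤ C * ‖P1 n x‖ := by
      have := ht1 m n hmn x
      have h2 : c * ‖T m n (P1 n x)‖ ≤ c * (K * (h n / h m) ^ a * μ n ^ ε * ‖P1 n x‖) :=
        mul_le_mul_of_nonneg_left this hc.le
      refine h2.trans ?_
      rw [hCdef]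
      have : c * (K * (h n / h m) ^ a * μ n ^ ε * ‖P1 n x‖)
          = (c * (h n / h m) ^ a) * (K * μ n ^ ε * ‖P1 n x‖) := by ring
      rw [this]
      have h3 : (c * (h n / h m) ^ a) * (K * μ n ^ ε * ‖P1 n x‖)
          ≤ D * (K * μ n ^ ε * ‖P1 n x‖) := by
        apply mul_le_mul_of_nonneg_right key1
        positivity
      refine h3.trans_eq ?_
      ring
    have b3 : c * ‖T m n (P3 n x)‖ ≤ C * ‖P3 n x‖ := by
      have := ht3 m n hmn x
      have h2 : c * ‖T m n (P3 n x)‖ ≤ c * (K * (h m / h n) ^ a * μ n ^ ε * ‖P3 n x‖) :=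
        mul_le_mul_of_nonneg_left this hc.le
      refine h2.trans_eq ?_
      rw [hCdef]
      have : c * (K * (h m / h n) ^ a * μ n ^ ε * ‖P3 n x‖)
          = (c * (h m / h n) ^ a) * (K * μ n ^ ε * ‖P3 n x‖) := by ring
      rw [this, key3]
      ring
    -- orthogonality
    have ecm1 : T m n (P1 n x) = P1 m (T m n x) := by
      have hcm := comm_aux' A T P1 hT0 hTs hinv1 m n hmn
      calc T m n (P1 n x) = ((T m n).comp (P1 n)) x := rfl
        _ = ((P1 m).comp (T m n)) x := by rw [hcm]
        _ = P1 m (T m n x) := rfl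
    have ecm3 : T m n (P3 n x) = P3 m (T m n x) := by
      have hcm := comm_aux' A T P3 hT0 hTs hinv3 m n hmn
      calc T m n (P3 n x) = ((T m n).comp (P3 n)) x := rfl
        _ = ((P3 m).comp (T m n)) x := by rw [hcm]
        _ = P3 m (T m n x) := rfl
    have io_m : ⟪T m n (P1 n x), T m n (P3 n x)⟫ = 0 := by
      rw [ecm1, ecm3]
      exact inner_proj_zero' (P1 m) (P3 m) (hsa1 m) (h13 m) _ _
    have io_n : ⟪P1 n x, P3 n x⟫ = 0 :=
      inner_proj_zero' (P1 n) (P3 n) (hsa1 n) (h13 n) _ _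
    have io_sm : ⟪c • T m n (P1 n x), c • T m n (P3 n x)⟫ = 0 := by
      rw [real_inner_smul_left, real_inner_smul_right, io_m]
      ring
    have pyth1 : ‖c • T m n (P1 n x) + c • T m n (P3 n x)‖ ^ 2
        = ‖c • T m n (P1 n x)‖ ^ 2 + ‖c • T m n (P3 n x)‖ ^ 2 := by
      rw [norm_add_sq_real, io_sm]
      ring
    have pyth2 : ‖P1 n x + P3 n x‖ ^ 2 = ‖P1 n x‖ ^ 2 + ‖P3 n x‖ ^ 2 := by
      rw [norm_add_sq_real, io_n]
      ring
    have hnu : ‖c • T m n (P1 n x)‖ = c * ‖T m n (P1 n x)‖ := by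
      rw [norm_smul, Real.norm_eq_abs, abs_of_pos hc]
    have hnv : ‖c • T m n (P3 n x)‖ = c * ‖T m n (P3 n x)‖ := by
      rw [norm_smul, Real.norm_eq_abs, abs_of_pos hc]
    have sq1 : (c * ‖T m n (P1 n x)‖) ^ 2 ≤ (C * ‖P1 n x‖) ^ 2 :=
      pow_le_pow_left₀ (by positivity) b1 2
    have sq3 : (c * ‖T m n (P3 n x)‖) ^ 2 ≤ (C * ‖P3 n x‖) ^ 2 :=
      pow_le_pow_left₀ (by positivity) b3 2
    have final_sq : ‖c • T m n (P1 n x) + c • T m n (P3 n x)‖ ^ 2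
        ≤ (C * ‖P1 n x + P3 n x‖) ^ 2 := by
      rw [pyth1, hnu, hnv]
      calc (c * ‖T m n (P1 n x)‖) ^ 2 + (c * ‖T m n (P3 n x)‖) ^ 2
          ≤ (C * ‖P1 n x‖) ^ 2 + (C * ‖P3 n x‖) ^ 2 := add_le_add sq1 sq3
        _ = C ^ 2 * (‖P1 n x‖ ^ 2 + ‖P3 n x‖ ^ 2) := by ring
        _ = C ^ 2 * ‖P1 n x + P3 n x‖ ^ 2 := by rw [pyth2]
        _ = (C * ‖P1 n x + P3 n x‖) ^ 2 := by ring
    have final : ‖c • T m n (P1 n x) + c • T m n (P3 n x)‖ ≤ C * ‖P1 n x + P3 n x‖ := by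
      have h1 := Real.sqrt_le_sqrt final_sq
      rwa [Real.sqrt_sq (norm_nonneg _), Real.sqrt_sq (by positivity)] at h1
    rw [hCT, hD]
    have hPadd : (P1 n + P3 n) x = P1 n x + P3 n x := rfl
    rw [hPadd]
    exact final
  · -- second estimate
    have hCT : TC m n (P2 n x) = c • T m n (P2 n x) := by
      rw [hTC m n hmn]; rfl
    rw [hCT, hD, norm_smul, Real.norm_eq_abs, abs_of_pos hc]
    have key2 : D * c = s ^ b := by
      rw [hDdef, hcdef, hinvt, ← hsdef]
      simp only [hrw_ti, hrw_s, hrw_t, ← Real.exp_add]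
      congr 1
      ring
    have := ht2 m n hmn x
    calc ‖P2 n x‖ ≤ K * (k n / k m) ^ b * ν m ^ ε * ‖T m n (P2 n x)‖ := this
      _ = K * D * ν m ^ ε * (c * ‖T m n (P2 n x)‖) := by
          rw [← hsdef, ← key2]; ring
end

section
/- Suppose the coupled systems satisfy: ‖B_m^n S_n^1 x‖ ≤ K (h̃_n/h̃_m)^{1/2} μ_n^ε ‖S_n^1 x‖, ‖S_n^2 x‖ ≤ K (h̃_n/h̃_m)^{1/2} ν_m^ε ‖B_m^n S_n^2 x‖, ‖C_m^n T_n^1 x‖ ≤ K (h̄_n/h̄_m)^{1/2} μ_n^ε ‖T_n^1 x‖, and ‖T_n^2 x‖ ≤ K (h̄_n/h̄_m)^{1/2} ν_m^ε ‖C_m^n T_n^2 x‖ for all m ≥ n and x ∈ H, where h̃_n = h_n^a/k_n^b, h̄_n = 1/h̃_n, S_n^1 T_n^2 = T_n^2 S_n^1 = 0 and S_n^2 T_n^1 = T_n^1 S_n^2. Then setting P_n^1 = S_n^1, P_n^2 = T_n^2, P_n^3 = T_n^1 S_n^2, the original system satisfies the four (h,k,μ,ν)-trichotomy estimates: ‖A_m^n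 P_n^1 x‖ ≤ K (h_n/h_m)^a μ_n^ε ‖P_n^1 x‖, ‖P_n^2 x‖ ≤ K (k_n/k_m)^b ν_m^ε ‖A_m^n P_n^2 x‖, ‖A_m^n P_n^3 x‖ ≤ K (h_m/h_n)^a μ_n^ε ‖P_n^3 x‖, and ‖P_n^3 x‖ ≤ K (k_m/k_n)^b ν_m^ε ‖A_m^n P_n^3 x‖. -/
open Filter

private lemma aux_half {x : ℝ} (hx : 0 < x) (p : ℝ) : x ^ (p/2) * x ^ (p/2) = x ^ p := by
  rw [← Real.rpow_add hx]; norm_num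

private lemma aux_inv {x : ℝ} (hx : 0 < x) (p : ℝ) : x⁻¹ ^ p = (x ^ p)⁻¹ :=
  Real.inv_rpow hx.le p

/-- If the coupled rescaled systems `B` and `C` admit FP `(h̃,μ,ν)`- resp.
FP `(h̄,μ,ν)`-dichotomies (with `h̃_n = h_n^a/k_n^b`, `h̄_n = 1/h̃_n`), then the
original system satisfies the four `(h,k,μ,ν)`-trichotomy estimates with
`P¹ = S¹`, `P² = T²`, `P³ = T¹S²`. -/
theorem FP_dichotomies_imply_trichotomy
    {H : Type*} [NormedAddCommGroup H] [InnerProductSpace ℝ H] [CompleteSpace H]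
    (A : ℕ → H →L[ℝ] H) (T TB TC : ℕ → ℕ → (H →L[ℝ] H))
    (h k μ ν : ℕ → ℝ) (K a b ε : ℝ)
    (hh : Monotone h ∧ h 0 = 1 ∧ (∀ n, 1 ≤ h n) ∧ Tendsto h atTop atTop)
    (hk : Monotone k ∧ k 0 = 1 ∧ (∀ n, 1 ≤ k n) ∧ Tendsto k atTop atTop)
    (hμ : Monotone μ ∧ μ 0 = 1 ∧ (∀ n, 1 ≤ μ n) ∧ Tendsto μ atTop atTop)
    (hν : Monotone ν ∧ ν 0 = 1 ∧ (∀ n, 1 ≤ ν n) ∧ Tendsto ν atTop atTop)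
    (hK : 0 < K) (ha : 0 < a) (hb : 0 ≤ b) (hε : 0 ≤ ε)
    (hT0 : ∀ n, T n n = 1)
    (hTs : ∀ m n, n ≤ m → T (m + 1) n = (A m).comp (T m n))
    (hTB : ∀ m n, n ≤ m →
      TB m n = (((h m / h n) ^ (a / 2)) * ((k m / k n) ^ (b / 2))) • T m n)
    (hTC : ∀ m n, n ≤ m →
      TC m n = (((h n / h m) ^ (a / 2)) * ((k n / k m) ^ (b / 2))) • T m n)
    (S1 S2 T1 T2 : ℕ → H →L[ℝ] H)
    (hS1 : ∀ n, (S1 n).comp (S1 n) = S1 n) (hS2 : ∀ n, (S2 n).comp (S2 n) = S2 n)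
    (hT1 : ∀ n, (T1 n).comp (T1 n) = T1 n) (hT2 : ∀ n, (T2 n).comp (T2 n) = T2 n)
    (hSsum : ∀ n, S1 n + S2 n = 1) (hTsum : ∀ n, T1 n + T2 n = 1)
    (hS1T2 : ∀ n, (S1 n).comp (T2 n) = 0) (hT2S1 : ∀ n, (T2 n).comp (S1 n) = 0)
    (hS2T1 : ∀ n, (S2 n).comp (T1 n) = (T1 n).comp (S2 n))
    (hinvSB : ∀ m n, n ≤ m → (TB m n).comp (S1 n) = (S1 m).comp (TB m n))
    (hinvSB2 : ∀ m n, n ≤ m → (TB m n).comp (S2 n) = (S2 m).comp (TB m n))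
    (hinvTC : ∀ m n, n ≤ m → (TC m n).comp (T1 n) = (T1 m).comp (TC m n))
    (hinvTC2 : ∀ m n, n ≤ m → (TC m n).comp (T2 n) = (T2 m).comp (TC m n))
    (hd1 : ∀ m n, n ≤ m → ∀ x : H,
      ‖TB m n (S1 n x)‖ ≤
        K * ((h n ^ a / k n ^ b) / (h m ^ a / k m ^ b)) ^ ((1 : ℝ) / 2) *
          μ n ^ ε * ‖S1 n x‖)
    (hd2 : ∀ m n, n ≤ m → ∀ x : H,
      ‖S2 n x‖ ≤
        K * ((h n ^ a / k n ^ b) / (h m ^ a / k m ^ b)) ^ ((1 : ℝ) / 2) *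
          ν m ^ ε * ‖TB m n (S2 n x)‖)
    (hd3 : ∀ m n, n ≤ m → ∀ x : H,
      ‖TC m n (T1 n x)‖ ≤
        K * (((h n ^ a / k n ^ b)⁻¹) / ((h m ^ a / k m ^ b)⁻¹)) ^ ((1 : ℝ) / 2) *
          μ n ^ ε * ‖T1 n x‖)
    (hd4 : ∀ m n, n ≤ m → ∀ x : H,
      ‖T2 n x‖ ≤
        K * (((h n ^ a / k n ^ b)⁻¹) / ((h m ^ a / k m ^ b)⁻¹)) ^ ((1 : ℝ) / 2) *
          ν m ^ ε * ‖TC m n (T2 n x)‖) :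
    ∀ m n, n ≤ m → ∀ x : H,
      ‖T m n (S1 n x)‖ ≤ K * (h n / h m) ^ a * μ n ^ ε * ‖S1 n x‖ ∧
      ‖T2 n x‖ ≤ K * (k n / k m) ^ b * ν m ^ ε * ‖T m n (T2 n x)‖ ∧
      ‖T m n ((T1 n).comp (S2 n) x)‖ ≤
        K * (h m / h n) ^ a * μ n ^ ε * ‖(T1 n).comp (S2 n) x‖ ∧
      ‖(T1 n).comp (S2 n) x‖ ≤
        K * (k m / k n) ^ b * ν m ^ ε * ‖T m n ((T1 n).comp (S2 n) x)‖ := by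
  intro m n hmn x
  have hhp : ∀ i, (0:ℝ) < h i := fun i => one_pos.trans_le (hh.2.2.1 i)
  have hkp : ∀ i, (0:ℝ) < k i := fun i => one_pos.trans_le (hk.2.2.1 i)
  set X : ℝ := h n / h m with hXdef
  set Xi : ℝ := h m / h n with hXidef
  set Y : ℝ := k n / k m with hYdef
  set Yi : ℝ := k m / k n with hYidef
  have hX : 0 < X := div_pos (hhp n) (hhp m)
  have hXi : 0 < Xi := div_pos (hhp m) (hhp n)
  have hY : 0 < Y := div_pos (hkp n) (hkp m)
  have hYi : 0 < Yi := div_pos (hkp m) (hkp n)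
  have hXiX : Xi = X⁻¹ := by rw [hXidef, hXdef, inv_div]
  have hYiY : Yi = Y⁻¹ := by rw [hYidef, hYdef, inv_div]
  -- the two base identities
  have hbase1 : ((h n ^ a / k n ^ b) / (h m ^ a / k m ^ b)) ^ ((1:ℝ)/2)
      = X ^ (a/2) * Yi ^ (b/2) := by
    have h1 : (h n ^ a / k n ^ b) / (h m ^ a / k m ^ b) = X ^ a * Yi ^ b := by
      rw [hXdef, hYidef, Real.div_rpow (hhp n).le (hhp m).le,
        Real.div_rpow (hkp m).le (hkp n).le]
      rw [div_div_div_comm, div_eq_mul_inv (h n ^ a / h m ^ a), inv_div]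
    rw [h1, Real.mul_rpow (Real.rpow_pos_of_pos hX a).le (Real.rpow_pos_of_pos hYi b).le,
      ← Real.rpow_mul hX.le, ← Real.rpow_mul hYi.le,
      show a * ((1:ℝ)/2) = a/2 by ring, show b * ((1:ℝ)/2) = b/2 by ring]
  have hbase2 : ((h n ^ a / k n ^ b)⁻¹ / (h m ^ a / k m ^ b)⁻¹) ^ ((1:ℝ)/2)
      = Xi ^ (a/2) * Y ^ (b/2) := by
    have h1 : (h n ^ a / k n ^ b)⁻¹ / (h m ^ a / k m ^ b)⁻¹ = Xi ^ a * Y ^ b := by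
      rw [hXidef, hYdef, Real.div_rpow (hhp m).le (hhp n).le,
        Real.div_rpow (hkp n).le (hkp m).le]
      rw [inv_div_inv, div_div_div_comm, div_eq_mul_inv (h m ^ a / h n ^ a), inv_div]
    rw [h1, Real.mul_rpow (Real.rpow_pos_of_pos hXi a).le (Real.rpow_pos_of_pos hY b).le,
      ← Real.rpow_mul hXi.le, ← Real.rpow_mul hY.le,
      show a * ((1:ℝ)/2) = a/2 by ring, show b * ((1:ℝ)/2) = b/2 by ring]
  -- abbreviations for half powers
  have hp : (0:ℝ) < X ^ (a/2) := Real.rpow_pos_of_pos hX _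
  have hq : (0:ℝ) < Y ^ (b/2) := Real.rpow_pos_of_pos hY _
  have hpi : Xi ^ (a/2) = (X ^ (a/2))⁻¹ := by rw [hXiX, aux_inv hX]
  have hqi : Yi ^ (b/2) = (Y ^ (b/2))⁻¹ := by rw [hYiY, aux_inv hY]
  have hXa : X ^ a = X ^ (a/2) * X ^ (a/2) := (aux_half hX a).symm
  have hXia : Xi ^ a = (X ^ (a/2) * X ^ (a/2))⁻¹ := by
    rw [hXiX, aux_inv hX, aux_half hX a]
  have hYb : Y ^ b = Y ^ (b/2) * Y ^ (b/2) := (aux_half hY b).symm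
  have hYib : Yi ^ b = (Y ^ (b/2) * Y ^ (b/2))⁻¹ := by
    rw [hYiY, aux_inv hY, aux_half hY b]
  have hc : (0:ℝ) < Xi ^ (a/2) * Yi ^ (b/2) :=
    mul_pos (Real.rpow_pos_of_pos hXi _) (Real.rpow_pos_of_pos hYi _)
  have hc' : (0:ℝ) < X ^ (a/2) * Y ^ (b/2) := mul_pos hp hq
  -- projection identities
  have hy1 : T1 n (T1 n (S2 n x)) = T1 n (S2 n x) := by
    conv_lhs => rw [← ContinuousLinearMap.comp_apply, hT1 n]
  have hy2 : S2 n (T1 n (S2 n x)) = T1 n (S2 n x) := by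
    rw [← ContinuousLinearMap.comp_apply, hS2T1 n, ContinuousLinearMap.comp_apply,
      ← ContinuousLinearMap.comp_apply (S2 n), hS2 n]
  refine ⟨?_, ?_, ?_, ?_⟩
  · -- part 1
    have H1 := hd1 m n hmn x
    rw [hTB m n hmn, hbase1] at H1
    rw [← hXidef, ← hYidef] at H1
    simp only [ContinuousLinearMap.smul_apply, norm_smul, Real.norm_eq_abs,
      abs_of_pos hc] at H1
    rw [← mul_le_mul_iff_right₀ hc]
    refine H1.trans (le_of_eq ?_)
    rw [hXa, hpi, hqi]
    field_simp
  · -- part 2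
    have H2 := hd4 m n hmn x
    rw [hTC m n hmn, hbase2] at H2
    rw [← hXdef, ← hYdef] at H2
    simp only [ContinuousLinearMap.smul_apply, norm_smul, Real.norm_eq_abs,
      abs_of_pos hc'] at H2
    refine H2.trans (le_of_eq ?_)
    rw [hYb, hpi]
    field_simp
  · -- part 3
    have H3 := hd3 m n hmn (S2 n x)
    rw [hTC m n hmn, hbase2] at H3
    rw [← hXdef, ← hYdef] at H3
    simp only [ContinuousLinearMap.smul_apply, norm_smul, Real.norm_eq_abs,
      abs_of_pos hc'] at H3
    simp only [ContinuousLinearMap.comp_apply]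
    rw [← mul_le_mul_iff_right₀ hc']
    refine H3.trans (le_of_eq ?_)
    rw [hXia, hpi]
    field_simp
  · -- part 4
    have H4 := hd2 m n hmn (T1 n (S2 n x))
    rw [hy2, hTB m n hmn, hbase1] at H4
    rw [← hXidef, ← hYidef] at H4
    simp only [ContinuousLinearMap.smul_apply, norm_smul, Real.norm_eq_abs,
      abs_of_pos hc] at H4
    simp only [ContinuousLinearMap.comp_apply]
    refine H4.trans (le_of_eq ?_)
    rw [hYib, hpi, hqi]
    field_simp
end
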